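/- For α > -1, b real, and n ≥ 1, the polynomial S_n(x) = L_n^α(x) + b·L_{n-1}^{α+1}(x) satisfies S_n(x) = L_n^{α+1}(x) + (b-1)·L_{n-1}^{α+1}(x) for all x; consequently, for b ≠ 1, the zeros of S_n interlace with the zeros of L_n^{α+1}. -/

import Mathlib

/-!
The identity is Pascal's rule `C(n+α+1, j) = C(n+α, j) + C(n+α, j-1)` applied to the coefficients.

For the interlacing write `S = P + (b - 1) Q` with `P = L_n^{α+1}`, `Q = L_{n-1}^{α+1}`. The
three-term recurrence shows by induction on `n` that the Wronskian `P Q' - P' Q` is positive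
everywhere (it gains `P²` at each step). At consecutive zeros `y < y'` of `P` the derivative `P'`
takes opposite signs, hence so does `Q`, hence so does `S = (b - 1) Q`. Between them the zeros of
`S` are the solutions of `Q / P = -1 / (b - 1)`, and `Q / P` is strictly increasing there because
its derivative is the Wronskian divided by `P²`.
-/

open Finset

/-- Generalized Laguerre polynomial `L_n^α(x) = ∑_{k=0}^n (-1)^k C(n+α, n-k) x^k / k!`,
where `C(n+α, n-k) = (∏_{i=1}^{n-k} (α+k+i)) / (n-k)!`. -/
noncomputable def laguerre (α : ℝ) (n : ℕ) (x : ℝ) : ℝ :=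
  ∑ k ∈ Finset.range (n + 1),
    (-1 : ℝ) ^ k * (∏ i ∈ Finset.range (n - k), (α + k + 1 + i)) /
      ((Nat.factorial (n - k) : ℝ) * (Nat.factorial k : ℝ)) * x ^ k

open Polynomial Nat

section Sturm

variable {f g f' g' : ℝ → ℝ} {y y' : ℝ}

lemma mul_pos_of_continuousOn_of_forall_ne_zero (hf : ContinuousOn f (Set.Ioo y y'))
    (hne : ∀ u ∈ Set.Ioo y y', f u ≠ 0) {u v : ℝ} (hu : u ∈ Set.Ioo y y') (hv : v ∈ Set.Ioo y y') :
    0 < f u * f v := by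
  have hconn := isPreconnected_Ioo.image f hf
  have hzero : ∀ {a b}, a ∈ Set.Ioo y y' → b ∈ Set.Ioo y y' → f a < 0 → 0 < f b → False :=
    fun ha hb hfa hfb => by
      obtain ⟨w, hw, hw0⟩ :=
        hconn.Icc_subset (Set.mem_image_of_mem f ha) (Set.mem_image_of_mem f hb) ⟨hfa.le, hfb.le⟩
      exact hne w hw hw0
  rcases (hne u hu).lt_or_gt with hfu | hfu <;> rcases (hne v hv).lt_or_gt with hfv | hfv
  · exact mul_pos_of_neg_of_neg hfu hfv
  · exact (hzero hu hv hfu hfv).elim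
  · exact (hzero hv hu hfv hfu).elim
  · exact mul_pos hfu hfv

lemma deriv_mul_deriv_nonpos_of_consecutive_zeros (hf : ∀ x, HasDerivAt f (f' x) x)
    (hyy' : y < y') (hy : f y = 0) (hy' : f y' = 0) (hne : ∀ u ∈ Set.Ioo y y', f u ≠ 0) :
    f' y * f' y' ≤ 0 := by
  obtain ⟨c, hc⟩ : (Set.Ioo y y').Nonempty := Set.nonempty_Ioo.2 hyy'
  have hsign : ∀ u ∈ Set.Ioo y y', 0 < f u * f c := fun u hu =>
    mul_pos_of_continuousOn_of_forall_ne_zero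
      (fun x _ => (hf x).continuousAt.continuousWithinAt) hne hu hc
  have hright : 0 ≤ f' y * f c := by
    refine ge_of_tendsto ((hasDerivAt_iff_tendsto_slope_left_right.1 (hf y)).2.mul_const _) ?_
    filter_upwards [Ioo_mem_nhdsGT hyy'] with u hu
    rw [slope_def_field, hy, sub_zero, div_mul_eq_mul_div]
    exact (div_pos (hsign u hu) (sub_pos.2 hu.1)).le
  have hleft : f' y' * f c ≤ 0 := by
    refine le_of_tendsto ((hasDerivAt_iff_tendsto_slope_left_right.1 (hf y')).1.mul_const _) ?_
    filter_upwards [Ioo_mem_nhdsLT hyy'] with u hu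
    rw [slope_def_field, hy', sub_zero, div_mul_eq_mul_div]
    exact (div_neg_of_pos_of_neg (hsign u hu) (sub_neg.2 hu.2)).le
  have hc0 : 0 < f c * f c := hsign c hc
  nlinarith [mul_nonpos_of_nonneg_of_nonpos hright hleft]

lemma mul_neg_at_consecutive_zeros_of_wronskian_pos (hf : ∀ x, HasDerivAt f (f' x) x)
    (hW : ∀ x, 0 < f x * g' x - f' x * g x) (hyy' : y < y') (hy : f y = 0)
    (hy' : f y' = 0) (hne : ∀ u ∈ Set.Ioo y y', f u ≠ 0) : g y * g y' < 0 := by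
  have hWy : 0 < -(f' y * g y) := by simpa [hy] using hW y
  have hWy' : 0 < -(f' y' * g y') := by simpa [hy'] using hW y'
  nlinarith [mul_pos hWy hWy', deriv_mul_deriv_nonpos_of_consecutive_zeros hf hyy' hy hy' hne]

lemma strictMonoOn_div_of_wronskian_pos (hf : ∀ x, HasDerivAt f (f' x) x)
    (hg : ∀ x, HasDerivAt g (g' x) x) (hW : ∀ x, 0 < f x * g' x - f' x * g x)
    (hne : ∀ u ∈ Set.Ioo y y', f u ≠ 0) : StrictMonoOn (fun x => g x / f x) (Set.Ioo y y') := by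
  refine strictMonoOn_of_hasDerivWithinAt_pos (convex_Ioo y y')
    (fun x hx => ((hg x).div (hf x) (hne x hx)).continuousAt.continuousWithinAt)
    (fun x hx => ((hg x).div (hf x) (hne x (interior_subset hx))).hasDerivWithinAt) ?_
  intro x hx
  have := hne x (interior_subset hx)
  exact div_pos (by linarith [hW x]) (by positivity)

theorem existsUnique_zero_of_wronskian_pos (hf : ∀ x, HasDerivAt f (f' x) x)
    (hg : ∀ x, HasDerivAt g (g' x) x) (hW : ∀ x, 0 < f x * g' x - f' x * g x) {c : ℝ}
    (hc : c ≠ 0) (hyy' : y < y') (hy : f y = 0) (hy' : f y' = 0)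
    (hne : ∀ u ∈ Set.Ioo y y', f u ≠ 0) :
    (f y + c * g y) * (f y' + c * g y') < 0 ∧ ∃! z, z ∈ Set.Ioo y y' ∧ f z + c * g z = 0 := by
  have hsign : (f y + c * g y) * (f y' + c * g y') < 0 := by
    rw [hy, hy', zero_add, zero_add, mul_mul_mul_comm]
    exact mul_neg_of_pos_of_neg (mul_self_pos.2 hc)
      (mul_neg_at_consecutive_zeros_of_wronskian_pos hf hW hyy' hy hy' hne)
  refine ⟨hsign, ?_⟩
  have hcont : ContinuousOn (fun x => f x + c * g x) (Set.Icc y y') := fun x _ =>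
    ((hf x).continuousAt.add (continuousAt_const.mul (hg x).continuousAt)).continuousWithinAt
  obtain ⟨z, hz, hz0⟩ : ∃ z ∈ Set.Ioo y y', f z + c * g z = 0 := by
    rcases mul_neg_iff.1 hsign with ⟨hpos, hneg⟩ | ⟨hneg, hpos⟩
    · exact intermediate_value_Ioo' hyy'.le hcont ⟨hneg, hpos⟩
    · exact intermediate_value_Ioo hyy'.le hcont ⟨hneg, hpos⟩
  have hratio : ∀ w ∈ Set.Ioo y y', f w + c * g w = 0 → g w / f w = -1 / c := fun w hw hw0 => by
    rw [div_eq_div_iff (hne w hw) hc]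
    linear_combination hw0
  refine ⟨z, ⟨hz, hz0⟩, fun w ⟨hw, hw0⟩ => ?_⟩
  exact (strictMonoOn_div_of_wronskian_pos hf hg hW hne).injOn hw hz
    ((hratio w hw hw0).trans (hratio z hz hz0).symm)

end Sturm

noncomputable def laguerreCoeff (β : ℝ) (n k : ℕ) : ℝ :=
  (-1 : ℝ) ^ k * (∏ i ∈ range (n - k), (β + k + 1 + i)) / ((n - k)! * k !)

noncomputable def laguerrePoly (β : ℝ) (n : ℕ) : ℝ[X] :=
  ∑ k ∈ range (n + 1), C (laguerreCoeff β n k) * X ^ k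

lemma eval_laguerrePoly (β : ℝ) (n : ℕ) (x : ℝ) :
    (laguerrePoly β n).eval x = laguerre β n x := by
  simp [laguerrePoly, laguerre, laguerreCoeff, eval_finsetSum]

lemma coeff_laguerrePoly (β : ℝ) (n k : ℕ) :
    (laguerrePoly β n).coeff k = if k ≤ n then laguerreCoeff β n k else 0 := by
  simp [laguerrePoly]

lemma laguerreCoeff_add (β : ℝ) (k d : ℕ) :
    laguerreCoeff β (k + d) k = (-1) ^ k * (∏ i ∈ range d, (β + k + 1 + i)) / (d ! * k !) := by
  simp [laguerreCoeff]

lemma laguerreCoeff_succ_eq_sub (β : ℝ) (k d : ℕ) :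
    laguerreCoeff β (k + d + 1) k =
      laguerreCoeff (β + 1) (k + d + 1) k - laguerreCoeff (β + 1) (k + d) k := by
  simp only [add_assoc k d 1, laguerreCoeff_add]
  have hshift : ∏ i ∈ range (d + 1), (β + k + 1 + i) =
      (β + k + 1) * ∏ i ∈ range d, (β + 1 + k + 1 + i) := by
    rw [prod_range_succ', mul_comm, cast_zero, add_zero]
    congr 1
    exact prod_congr rfl fun i _ => by push_cast; ring
  rw [hshift, prod_range_succ, factorial_succ]
  push_cast
  field_simp
  ring

lemma laguerreCoeff_self (β : ℝ) (n : ℕ) : laguerreCoeff β n n = (-1) ^ n / n ! := by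
  simp [laguerreCoeff]

lemma succ_mul_laguerreCoeff_succ (β : ℝ) (k d : ℕ) :
    (k + 1) * laguerreCoeff β (k + d + 1) (k + 1) = -laguerreCoeff (β + 1) (k + d) k := by
  rw [add_right_comm, laguerreCoeff_add, laguerreCoeff_add, pow_succ, factorial_succ]
  have hprod : ∏ i ∈ range d, (β + ↑(k + 1) + 1 + i) = ∏ i ∈ range d, (β + 1 + k + 1 + i) :=
    prod_congr rfl fun i _ => by push_cast; ring
  rw [hprod]
  push_cast
  field_simp

lemma laguerreCoeff_succ_ratio (β : ℝ) (k d : ℕ) :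
    (d + 1) * laguerreCoeff β (k + d + 1) k = (k + d + 1 + β) * laguerreCoeff β (k + d) k := by
  rw [add_assoc k d 1, laguerreCoeff_add, laguerreCoeff_add, prod_range_succ, factorial_succ]
  push_cast
  field_simp
  ring

lemma laguerrePoly_succ_eq_sub (β : ℝ) (n : ℕ) :
    laguerrePoly β (n + 1) = laguerrePoly (β + 1) (n + 1) - laguerrePoly (β + 1) n := by
  ext k
  simp only [coeff_sub, coeff_laguerrePoly]
  rcases le_or_gt k n with hk | hk
  · obtain ⟨d, rfl⟩ := Nat.exists_eq_add_of_le hk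
    rw [if_pos (by omega), if_pos (by omega), if_pos hk, laguerreCoeff_succ_eq_sub]
  · rcases (Nat.succ_le_of_lt hk).eq_or_lt with rfl | hk'
    · simp [laguerreCoeff_self]
    · simp [show ¬k ≤ n + 1 by omega, show ¬k ≤ n by omega]

lemma derivative_laguerrePoly_succ (β : ℝ) (n : ℕ) :
    derivative (laguerrePoly β (n + 1)) = -laguerrePoly (β + 1) n := by
  ext k
  rw [coeff_derivative, coeff_neg, coeff_laguerrePoly, coeff_laguerrePoly]
  by_cases hk : k ≤ n
  · obtain ⟨d, rfl⟩ := Nat.exists_eq_add_of_le hk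
    rw [if_pos (by omega), if_pos hk, mul_comm, ← succ_mul_laguerreCoeff_succ, add_right_comm]
  · rw [if_neg (by omega), if_neg hk, zero_mul, neg_zero]

lemma X_mul_derivative_laguerrePoly_succ (β : ℝ) (n : ℕ) :
    X * derivative (laguerrePoly β (n + 1)) =
      C ((n : ℝ) + 1) * laguerrePoly β (n + 1) - C ((n : ℝ) + 1 + β) * laguerrePoly β n := by
  ext k
  simp only [coeff_sub, coeff_C_mul]
  rcases k with _ | k
  · have := laguerreCoeff_succ_ratio β 0 n
    simp only [zero_add, cast_zero] at this
    simp [coeff_laguerrePoly, this]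
  rw [coeff_X_mul, coeff_derivative, coeff_laguerrePoly, coeff_laguerrePoly]
  rcases le_or_gt (k + 1) n with hk | hk
  · obtain ⟨d, rfl⟩ := Nat.exists_eq_add_of_le hk
    have := laguerreCoeff_succ_ratio β (k + 1) d
    rw [if_pos (by omega), if_pos hk]
    push_cast at this ⊢
    linarith
  · rcases (Nat.succ_le_of_lt hk).eq_or_lt with hkn | hkn
    · obtain rfl : k = n := by omega
      rw [if_pos le_rfl, if_neg (by omega)]
      ring
    · simp [show ¬k + 1 ≤ n + 1 by omega, show ¬k + 1 ≤ n by omega]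

lemma laguerrePoly_recurrence (β : ℝ) (n : ℕ) :
    C ((n : ℝ) + 2) * laguerrePoly β (n + 2) =
      (C (2 * n + 3 + β) - X) * laguerrePoly β (n + 1) - C ((n : ℝ) + 1 + β) * laguerrePoly β n := by
  have hE₀ := X_mul_derivative_laguerrePoly_succ β n
  have hE₁ := X_mul_derivative_laguerrePoly_succ β (n + 1)
  rw [derivative_laguerrePoly_succ] at hE₀ hE₁
  have hI := laguerrePoly_succ_eq_sub β n
  simp only [cast_add, cast_one, map_add, map_mul, map_natCast, map_one, map_ofNat] at hE₀ hE₁ ⊢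
  linear_combination -hE₁ + hE₀ + X * hI

lemma wronskian_of_three_term_recurrence {R : Type*} [CommRing R] {p q r : R[X]} {a b c : R}
    (h : C c * r = (C a - X) * q - C b * p) :
    C c * wronskian r q = q ^ 2 + C b * wronskian q p := by
  have hd := congrArg derivative h
  simp only [derivative_mul, derivative_sub, derivative_C, derivative_X, zero_mul, zero_add,
    zero_sub] at hd
  unfold wronskian
  linear_combination derivative q * h - q * hd

lemma eval_wronskian_laguerrePoly_succ_pos {β : ℝ} (hβ : -1 < β) (n : ℕ) (x : ℝ) :
    0 < (wronskian (laguerrePoly β (n + 1)) (laguerrePoly β n)).eval x := by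
  induction n with
  | zero => simp [wronskian, laguerrePoly, laguerreCoeff, sum_range_succ]
  | succ n ih =>
    have h := congrArg (eval x) (wronskian_of_three_term_recurrence (laguerrePoly_recurrence β n))
    simp only [eval_mul, eval_add, eval_pow, eval_C] at h
    have hn : 0 < (n : ℝ) + 1 + β := by linarith [n.cast_nonneg (α := ℝ)]
    refine pos_of_mul_pos_right (h ▸ ?_) (by positivity : (0 : ℝ) ≤ n + 2)
    exact add_pos_of_nonneg_of_pos (sq_nonneg _) (mul_pos hn ih)

lemma hasDerivAt_laguerre (β : ℝ) (n : ℕ) (x : ℝ) :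
    HasDerivAt (laguerre β n) ((derivative (laguerrePoly β n)).eval x) x := by
  simpa only [eval_laguerrePoly] using (laguerrePoly β n).hasDerivAt x

lemma laguerre_succ_eq_sub (α : ℝ) (n : ℕ) (x : ℝ) :
    laguerre α (n + 1) x = laguerre (α + 1) (n + 1) x - laguerre (α + 1) n x := by
  rw [← eval_laguerrePoly, laguerrePoly_succ_eq_sub, eval_sub, eval_laguerrePoly,
    eval_laguerrePoly]

theorem S_t_one_identity_and_interlacing (α b : ℝ) (hα : α > -1) (n : ℕ) (hn : 1 ≤ n)
    (S : ℝ → ℝ) (hS : ∀ x, S x = laguerre α n x + b * laguerre (α + 1) (n - 1) x) :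
    (∀ x, S x = laguerre (α + 1) n x + (b - 1) * laguerre (α + 1) (n - 1) x) ∧
    (b ≠ 1 → ∀ y y' : ℝ, y < y' → laguerre (α + 1) n y = 0 →
      laguerre (α + 1) n y' = 0 → (∀ u ∈ Set.Ioo y y', laguerre (α + 1) n u ≠ 0) →
      S y * S y' < 0 ∧ ∃! z, z ∈ Set.Ioo y y' ∧ S z = 0) := by
  obtain ⟨m, rfl⟩ : ∃ m, n = m + 1 := ⟨n - 1, by omega⟩
  rw [Nat.add_sub_cancel] at hS ⊢
  have hSeq : ∀ x, S x = laguerre (α + 1) (m + 1) x + (b - 1) * laguerre (α + 1) m x := by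
    intro x
    rw [hS, laguerre_succ_eq_sub]
    ring
  refine ⟨hSeq, fun hb y y' hyy' hy hy' hne => ?_⟩
  have hW (x : ℝ) : 0 < laguerre (α + 1) (m + 1) x * (derivative (laguerrePoly (α + 1) m)).eval x
      - (derivative (laguerrePoly (α + 1) (m + 1))).eval x * laguerre (α + 1) m x := by
    simpa [wronskian, eval_laguerrePoly] using
      eval_wronskian_laguerrePoly_succ_pos (by linarith : -1 < α + 1) m x
  simp only [hSeq]
  exact existsUnique_zero_of_wronskian_pos (hasDerivAt_laguerre _ _) (hasDerivAt_laguerre _ _) hW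
    (sub_ne_zero.2 hb) hyy' hy hy' hne
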